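/- Let f be holomorphic on a neighborhood of the closed disk B̄(t₀, 4δ) ⊆ ℂ, real-valued on ℝ, with |f(z)| ≤ M_R on B̄(t₀, 4δ) and max_{t ∈ I} |f(t)| ≥ m₀ > 0 for a real interval I ⊆ B(t₀, δ) ∩ ℝ. Then the number of zeros of f in B̄(t₀, δ) is at most (log M_R - log m₀)/log(17/8). -/

import Mathlib

open Metric

/-!
Dividing `f` by the Blaschke factor of the disk `B(c, R)` at a zero `a ∈ B̄(c, r)` removes that
zero without changing `|f|` on the circle `|z - c| = R`, and, by the pseudo-hyperbolic triangle
inequality, multiplies `|f|` on `B̄(c, r)` by at least `(R² + r²)/(2Rr)`. Removing all zeros in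
`B̄(c, r)` and applying the maximum modulus principle gives `m₀ ((R² + r²)/(2Rr))^#Z ≤ M_R`;
take logarithms with `R = 4δ`, `r = δ`.
-/

section BlaschkeDivision

open Complex ComplexConjugate

theorem add_sq_mul_norm_sub_le {r R : ℝ} (hrR : r ≤ R) {a w : ℂ} (ha : ‖a‖ ≤ r) (hw : ‖w‖ ≤ r) :
    (R ^ 2 + r ^ 2) * ‖w - a‖ ≤ 2 * r * ‖(R : ℂ) ^ 2 - conj a * w‖ := by
  have hr : 0 ≤ r := (norm_nonneg a).trans ha
  set s := a.re * w.re + a.im * w.im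
  have ha2 : ‖a‖ ^ 2 = a.re ^ 2 + a.im ^ 2 := by rw [← normSq_eq_norm_sq, normSq_apply]; ring
  have hw2 : ‖w‖ ^ 2 = w.re ^ 2 + w.im ^ 2 := by rw [← normSq_eq_norm_sq, normSq_apply]; ring
  have hs : -(‖a‖ * ‖w‖) ≤ s := by
    have := abs_re_le_norm (conj a * w)
    rw [norm_mul, norm_conj, mul_re, conj_re, conj_im] at this
    linarith [neg_abs_le (a.re * w.re - -a.im * w.im)]
  have hnum : ‖w - a‖ ^ 2 = ‖a‖ ^ 2 + ‖w‖ ^ 2 - 2 * s := by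
    rw [← normSq_eq_norm_sq, normSq_apply, ha2, hw2]
    simp only [sub_re, sub_im, s]
    ring
  have hden : ‖(R : ℂ) ^ 2 - conj a * w‖ ^ 2 = R ^ 4 - 2 * R ^ 2 * s + ‖a‖ ^ 2 * ‖w‖ ^ 2 := by
    rw [← normSq_eq_norm_sq, normSq_apply, ha2, hw2, ← ofReal_pow]
    simp only [sub_re, sub_im, mul_re, mul_im, conj_re, conj_im, ofReal_re, ofReal_im, s]
    ring
  -- with `x = ‖a‖ ≤ r`, `y = ‖w‖ ≤ r`:
  -- `2r(R² + xy) - (R² + r²)(x + y) = (r - x)(R² + r² - 2ry) + (R² - r²)(r - y)`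
  have hfac : 0 ≤ 2 * r * (R ^ 2 + ‖a‖ * ‖w‖) - (R ^ 2 + r ^ 2) * (‖a‖ + ‖w‖) := by
    nlinarith [mul_nonneg (sub_nonneg.2 ha) (sub_nonneg.2 hw),
      mul_nonneg (sub_nonneg.2 hrR) (sub_nonneg.2 hw),
      mul_nonneg (sub_nonneg.2 hrR) (sub_nonneg.2 ha)]
  -- after squaring, the right side minus the left side is
  -- `2(R² - r²)²(s + xy) + (2r(R² + xy))² - ((R² + r²)(x + y))²`
  refine le_of_pow_le_pow_left₀ two_ne_zero (by positivity) ?_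
  rw [mul_pow, mul_pow, hnum, hden]
  nlinarith [mul_nonneg (sq_nonneg (R ^ 2 - r ^ 2)) (neg_le_iff_add_nonneg.1 hs),
    mul_nonneg hfac
      (by positivity : 0 ≤ 2 * r * (R ^ 2 + ‖a‖ * ‖w‖) + (R ^ 2 + r ^ 2) * (‖a‖ + ‖w‖))]

theorem norm_sq_sub_conj_mul_of_norm_eq {R : ℝ} {a z : ℂ} (hz : ‖z‖ = R) :
    ‖(R : ℂ) ^ 2 - conj a * z‖ = R * ‖z - a‖ := by
  have hzz : (R : ℂ) ^ 2 = z * conj z := by rw [mul_conj, normSq_eq_norm_sq, hz]; push_cast; rfl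
  rw [hzz, show z * conj z - conj a * z = z * conj (z - a) by rw [map_sub]; ring, norm_mul,
    norm_conj, hz]

theorem sub_mul_dslope_of_eq_zero {f : ℂ → ℂ} {a : ℂ} (ha : f a = 0) (z : ℂ) :
    (z - a) * dslope f a z = f z := by
  simpa [ha] using sub_smul_dslope f a z

/-- `f` divided by the Blaschke factor `R (z - a) / (R² - conj (a - c) (z - c))` of the disk
`ball c R`. -/
noncomputable def divBlaschke (f : ℂ → ℂ) (c : ℂ) (R : ℝ) (a : ℂ) (z : ℂ) : ℂ :=
  dslope f a z * ((R : ℂ) ^ 2 - conj (a - c) * (z - c)) / R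

variable {f : ℂ → ℂ} {c a : ℂ} {R : ℝ}

theorem DifferentiableOn.divBlaschke (hf : DifferentiableOn ℂ f (closedBall c R))
    (ha : a ∈ ball c R) : DifferentiableOn ℂ (divBlaschke f c R a) (closedBall c R) := by
  have hdslope := (Complex.differentiableOn_dslope
    (mem_nhds_iff.2 ⟨ball c R, ball_subset_closedBall, isOpen_ball, ha⟩)).2 hf
  unfold _root_.divBlaschke
  fun_prop

theorem norm_divBlaschke_of_mem_sphere (hR : 0 < R) (ha : f a = 0) {z : ℂ} (hz : z ∈ sphere c R) :
    ‖divBlaschke f c R a z‖ = ‖f z‖ := by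
  have hzc : ‖z - c‖ = R := mem_sphere_iff_norm.1 hz
  rw [divBlaschke, norm_div, norm_mul, norm_sq_sub_conj_mul_of_norm_eq hzc,
    sub_sub_sub_cancel_right, norm_real, Real.norm_of_nonneg hR.le,
    ← sub_mul_dslope_of_eq_zero ha z, norm_mul]
  field_simp

theorem divBlaschke_eq_zero (ha : f a = 0) {b : ℂ} (hb : f b = 0) (hba : b ≠ a) :
    divBlaschke f c R a b = 0 := by
  simp [divBlaschke, dslope_of_ne f hba, slope_def_field, ha, hb]

theorem mul_norm_le_norm_divBlaschke {r : ℝ} (hr : 0 < r) (hrR : r ≤ R) (ha : f a = 0)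
    (har : a ∈ closedBall c r) {w : ℂ} (hw : w ∈ closedBall c r) :
    (R ^ 2 + r ^ 2) / (2 * R * r) * ‖f w‖ ≤ ‖divBlaschke f c R a w‖ := by
  have hR : 0 < R := hr.trans_le hrR
  have key := add_sq_mul_norm_sub_le hrR (mem_closedBall_iff_norm.1 har)
    (mem_closedBall_iff_norm.1 hw)
  rw [sub_sub_sub_cancel_right] at key
  rw [divBlaschke, norm_div, norm_mul, norm_real, Real.norm_of_nonneg hR.le,
    ← sub_mul_dslope_of_eq_zero ha w, norm_mul, div_mul_eq_mul_div,
    div_le_div_iff₀ (by positivity) hR]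
  calc (R ^ 2 + r ^ 2) * (‖w - a‖ * ‖dslope f a w‖) * R
      = (R ^ 2 + r ^ 2) * ‖w - a‖ * (‖dslope f a w‖ * R) := by ring
    _ ≤ 2 * r * ‖(R : ℂ) ^ 2 - conj (a - c) * (w - c)‖ * (‖dslope f a w‖ * R) :=
        mul_le_mul_of_nonneg_right key (by positivity)
    _ = _ := by ring

theorem norm_le_of_forall_mem_sphere_norm_le {g : ℂ → ℂ} {M : ℝ} (hR : 0 < R)
    (hg : DifferentiableOn ℂ g (closedBall c R)) (hM : ∀ z ∈ sphere c R, ‖g z‖ ≤ M) {w : ℂ}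
    (hw : w ∈ closedBall c R) : ‖g w‖ ≤ M :=
  Complex.norm_le_of_forall_mem_frontier_norm_le isBounded_ball (hg.diffContOnCl_ball subset_rfl)
    (by rwa [frontier_ball c hR.ne']) (by rwa [closure_ball c hR.ne'])

theorem norm_mul_pow_card_le_of_forall_eq_zero {r M : ℝ} (hr : 0 < r) (hrR : r < R)
    (hf : DifferentiableOn ℂ f (closedBall c R)) (hM : ∀ z ∈ sphere c R, ‖f z‖ ≤ M)
    {Z : Finset ℂ} (hZ : ∀ z ∈ Z, z ∈ closedBall c r ∧ f z = 0) {w : ℂ} (hw : w ∈ closedBall c r) :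
    ‖f w‖ * ((R ^ 2 + r ^ 2) / (2 * R * r)) ^ Z.card ≤ M := by
  have hR : 0 < R := hr.trans hrR
  induction Z using Finset.induction_on generalizing f with
  | empty =>
    simpa using norm_le_of_forall_mem_sphere_norm_le hR hf hM
      (closedBall_subset_closedBall hrR.le hw)
  | @insert a Z haZ ih =>
    obtain ⟨har, ha⟩ := hZ a (Finset.mem_insert_self a Z)
    have hg := hf.divBlaschke (closedBall_subset_ball hrR har)
    have hgM : ∀ z ∈ sphere c R, ‖divBlaschke f c R a z‖ ≤ M := fun z hz =>
      (norm_divBlaschke_of_mem_sphere hR ha hz).trans_le (hM z hz)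
    have hgZ : ∀ z ∈ Z, z ∈ closedBall c r ∧ divBlaschke f c R a z = 0 := fun z hz =>
      have hzZ := hZ z (Finset.mem_insert_of_mem hz)
      ⟨hzZ.1, divBlaschke_eq_zero ha hzZ.2 (ne_of_mem_of_not_mem hz haZ)⟩
    calc ‖f w‖ * ((R ^ 2 + r ^ 2) / (2 * R * r)) ^ (insert a Z).card
        = (R ^ 2 + r ^ 2) / (2 * R * r) * ‖f w‖ * ((R ^ 2 + r ^ 2) / (2 * R * r)) ^ Z.card := by
          rw [Finset.card_insert_of_notMem haZ, pow_succ]; ring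
      _ ≤ ‖divBlaschke f c R a w‖ * ((R ^ 2 + r ^ 2) / (2 * R * r)) ^ Z.card := by
          gcongr; exact mul_norm_le_norm_divBlaschke hr hrR.le ha har hw
      _ ≤ M := ih hg hgM hgZ

theorem card_le_log_sub_log_div_of_forall_eq_zero {r M m : ℝ} (hr : 0 < r) (hrR : r < R)
    (hm : 0 < m) (hf : DifferentiableOn ℂ f (closedBall c R)) (hM : ∀ z ∈ sphere c R, ‖f z‖ ≤ M)
    {Z : Finset ℂ} (hZ : ∀ z ∈ Z, z ∈ closedBall c r ∧ f z = 0) {w : ℂ} (hw : w ∈ closedBall c r)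
    (hmw : m ≤ ‖f w‖) :
    (Z.card : ℝ) ≤ (Real.log M - Real.log m) / Real.log ((R ^ 2 + r ^ 2) / (2 * R * r)) := by
  have hR : 0 < R := hr.trans hrR
  have hk : 1 < (R ^ 2 + r ^ 2) / (2 * R * r) := by
    rw [one_lt_div (by positivity)]
    nlinarith [pow_pos (sub_pos.2 hrR) 2]
  have hbound : m * ((R ^ 2 + r ^ 2) / (2 * R * r)) ^ Z.card ≤ M :=
    (mul_le_mul_of_nonneg_right hmw (by positivity)).trans
      (norm_mul_pow_card_le_of_forall_eq_zero hr hrR hf hM hZ hw)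
  rw [le_div_iff₀ (Real.log_pos hk), ← Real.log_pow, le_sub_iff_add_le',
    ← Real.log_mul hm.ne' (by positivity)]
  exact Real.log_le_log (by positivity) hbound

end BlaschkeDivision

theorem stmt19_general (f : ℂ → ℂ) (U : Set ℂ) (t₀ : ℝ) (δ : ℝ) (hδ : 0 < δ)
    (hball : closedBall (t₀ : ℂ) (4 * δ) ⊆ U) (hf : DifferentiableOn ℂ f U)
    (M_R m₀ : ℝ) (hm₀ : 0 < m₀)
    (hM : ∀ z ∈ closedBall (t₀ : ℂ) (4 * δ), ‖f z‖ ≤ M_R)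
    (u v : ℝ)
    (hI : ∀ t ∈ Set.Icc u v, (t : ℂ) ∈ ball (t₀ : ℂ) δ)
    (hlow : ∃ t ∈ Set.Icc u v, m₀ ≤ ‖f (t : ℂ)‖)
    (Z : Finset ℂ) (hZ : ∀ z ∈ Z, z ∈ closedBall (t₀ : ℂ) δ ∧ f z = 0) :
    (Z.card : ℝ) ≤ (Real.log M_R - Real.log m₀) / Real.log (17 / 8) := by
  obtain ⟨t, ht, hmt⟩ := hlow
  have hratio : ((4 * δ) ^ 2 + δ ^ 2) / (2 * (4 * δ) * δ) = 17 / 8 := by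
    field_simp; ring
  simpa only [hratio] using card_le_log_sub_log_div_of_forall_eq_zero hδ (by linarith) hm₀
    (hf.mono hball) (fun z hz => hM z (sphere_subset_closedBall hz)) hZ
    (ball_subset_closedBall (hI t ht)) hmt

/-- Quantitative zero-count bound via Jensen's inequality with radii `δ` and `4δ`:
a holomorphic function bounded by `M_R` on `closedBall t₀ (4δ)`, real on `ℝ`, whose
maximum on a real interval `I ⊆ B(t₀, δ)` is at least `m₀ > 0`, has at most
`(log M_R - log m₀)/log(17/8)` zeros in `closedBall t₀ δ`. -/
theorem stmt19 (f : ℂ → ℂ) (U : Set ℂ) (hU : IsOpen U) (t₀ : ℝ) (δ : ℝ) (hδ : 0 < δ)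
    (hball : closedBall (t₀ : ℂ) (4 * δ) ⊆ U) (hf : DifferentiableOn ℂ f U)
    (hreal : ∀ t : ℝ, (f (t : ℂ)).im = 0)
    (M_R m₀ : ℝ) (hm₀ : 0 < m₀)
    (hM : ∀ z ∈ closedBall (t₀ : ℂ) (4 * δ), ‖f z‖ ≤ M_R)
    (u v : ℝ) (huv : u ≤ v)
    (hI : ∀ t ∈ Set.Icc u v, (t : ℂ) ∈ ball (t₀ : ℂ) δ)
    (hlow : ∃ t ∈ Set.Icc u v, m₀ ≤ ‖f (t : ℂ)‖)
    (Z : Finset ℂ) (hZ : ∀ z ∈ Z, z ∈ closedBall (t₀ : ℂ) δ ∧ f z = 0) :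
    (Z.card : ℝ) ≤ (Real.log M_R - Real.log m₀) / Real.log (17 / 8) :=
  stmt19_general f U t₀ δ hδ hball hf M_R m₀ hm₀ hM u v hI hlow Z hZ
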